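/- Peeling lemma for policy improvement: for any four DTRs π, π', π'', π^b, any stage k ∈ {1,…,K−1}, and any history h⃗_k ∈ 𝓗_k, writing a_k = π_k(h⃗_k), the relative value functions satisfy V^{π_k π'_{(k+1):K} / π^b}_k(h⃗_k) − V^{π_k π''_{(k+1):K} / π^b}_k(h⃗_k) ≤ sup_{p ∈ 𝒫_{h⃗_k, a_k}} ∫ [ V^{π'_{(k+1):K}/π^b}_{k+1}(h⃗_k, a_k, r, x) − V^{π''_{(k+1):K}/π^b}_{k+1}(h⃗_k, a_k, r, x) ] dp(r, x). (Supplementary peeling lemma for improvement.) -/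

import Mathlib

open MeasureTheory

noncomputable section

open Classical in
/-- Real-valued indicator `1{p}` of a proposition. -/
noncomputable def ind (p : Prop) : ℝ := if p then 1 else 0

/-- Sign function: `+1` for positive, `−1` for negative, `0` at zero. -/
noncomputable def sgn (c : ℝ) : ℝ := if 0 < c then 1 else if c < 0 then -1 else 0

section DTR

/- Multi-stage setup: histories `H k` for stage indices `k = 0, …, K-1`
(stage `k+1` of the paper); `H K` is the terminal (post-trajectory) type.
New covariates arising after stage `k` live in `X (k+1)`, and
`concat k h a r x` is the concatenated history `(h⃗_k, a_k, r_k, x_{k+1})`.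
`P k h a` is the IV-constrained set of joint laws of `(R_k, X_{k+1})`.
At the last stage the new covariate is a null quantity that is simply ignored
(the terminal value function is identically `0`, so the stage-`K` formulas of the
paper are recovered). -/
variable (X : ℕ → Type) [∀ k, MeasurableSpace (X k)]
variable (H : ℕ → Type)
variable (concat : ∀ k, H k → ℝ → ℝ → X (k + 1) → H (k + 1))
variable (P : ∀ k, H k → ℝ → Set (Measure (ℝ × X (k + 1))))

open Classical in
/-- Relative value function of `π` with respect to the baseline `πb`, by backward induction
with `fuel` stages to go.  Writing `a'_k = π^b_k(h⃗_k)`: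
if `π_k(h⃗_k) = a'_k` it is `inf_{p ∈ 𝒫_{h⃗_k,a'_k}} ∫ V^{π/π^b}_{k+1}(h⃗_k,a'_k,r,x) dp`,
otherwise it is
`inf_{p ∈ 𝒫_{h⃗_k,−a'_k}} ∫ [r + V^{π/π^b}_{k+1}(h⃗_k,−a'_k,r,x)] dp − sup_{p' ∈ 𝒫_{h⃗_k,a'_k}} ∫ r dp'`. -/
noncomputable def rVal (πb π : ∀ k, H k → ℝ) : (fuel : ℕ) → (k : ℕ) → H k → ℝ
  | 0, _, _ => 0
  | fuel + 1, k, h =>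
      if π k h = πb k h then
        sInf ((fun p : Measure (ℝ × X (k + 1)) =>
            ∫ q, rVal πb π fuel (k + 1) (concat k h (πb k h) q.1 q.2) ∂p) '' P k h (πb k h))
      else
        sInf ((fun p : Measure (ℝ × X (k + 1)) =>
            ∫ q, (q.1 + rVal πb π fuel (k + 1) (concat k h (-(πb k h)) q.1 q.2)) ∂p)
            '' P k h (-(πb k h)))
          - sSup ((fun p : Measure (ℝ × X (k + 1)) => ∫ q, q.1 ∂p) '' P k h (πb k h))

/-- Relative value function `V^{π/π^b}_k` in a `K`-stage problem (stages `k = 0, …, K-1`). -/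
noncomputable def rV (K : ℕ) (πb π : ∀ k, H k → ℝ) (k : ℕ) (h : H k) : ℝ :=
  rVal X H concat P πb π (K - k) k h

open Classical in
/-- Relative `Q`-function `Q^{π/π^b}_k(h⃗_k, a)`. -/
noncomputable def rQ (K : ℕ) (πb π : ∀ k, H k → ℝ) (k : ℕ) (h : H k) (a : ℝ) : ℝ :=
  if a = πb k h then
    sInf ((fun p : Measure (ℝ × X (k + 1)) =>
        ∫ q, rV X H concat P K πb π (k + 1) (concat k h (πb k h) q.1 q.2) ∂p)
        '' P k h (πb k h))
  else
    sInf ((fun p : Measure (ℝ × X (k + 1)) =>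
        ∫ q, (q.1 + rV X H concat P K πb π (k + 1) (concat k h (-(πb k h)) q.1 q.2)) ∂p)
        '' P k h (-(πb k h)))
      - sSup ((fun p : Measure (ℝ × X (k + 1)) => ∫ q, q.1 ∂p) '' P k h (πb k h))

/-- Relative contrast `𝒞^{π/π^b}_k(h⃗_k)`
`= sup_{p'∈𝒫_{h⃗_k,a'_k}} ∫ r dp' + inf_{p∈𝒫_{h⃗_k,a'_k}} ∫ V^{π/π^b}_{k+1}(h⃗_k,a'_k,r,x) dp
   − inf_{p∈𝒫_{h⃗_k,−a'_k}} ∫ [r + V^{π/π^b}_{k+1}(h⃗_k,−a'_k,r,x)] dp`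
(at the final stage the middle term is `inf ∫ 0 dp = 0`, recovering the stage-`K` formula). -/
noncomputable def rC (K : ℕ) (πb π : ∀ k, H k → ℝ) (k : ℕ) (h : H k) : ℝ :=
  sSup ((fun p : Measure (ℝ × X (k + 1)) => ∫ q, q.1 ∂p) '' P k h (πb k h))
    + sInf ((fun p : Measure (ℝ × X (k + 1)) =>
        ∫ q, rV X H concat P K πb π (k + 1) (concat k h (πb k h) q.1 q.2) ∂p)
        '' P k h (πb k h))
    - sInf ((fun p : Measure (ℝ × X (k + 1)) =>
        ∫ q, (q.1 + rV X H concat P K πb π (k + 1) (concat k h (-(πb k h)) q.1 q.2)) ∂p)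
        '' P k h (-(πb k h)))

end DTR


/-- The DTR that acts according to `π1` at stage `k` and according to `π2` at the other
stages (only its behavior at stages `≥ k` matters for stage-`k` value functions). -/
def mixAt (H : ℕ → Type) (π1 π2 : ∀ k, H k → ℝ) (k : ℕ) : ∀ j, H j → ℝ :=
  fun j => if j = k then π1 j else π2 j

/-! At stage `k` both DTRs take the action `a = π_k(h⃗_k)`, so both relative values are the same
`Q`-expression in their continuation values: an infimum over `𝒫_{h⃗_k,a}` of integrals (plus the
same reward terms when `a` is not the baseline action), and a difference of infima is at most the
supremum of the differences.

The real work is that this supremum is finite, since the hypotheses only bound integrals of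
relative values from below. By backward induction, a relative value function is bounded above
pointwise by minus a finite sum of relative value functions of other policy pairs: at each stage
the pairs of the next stage are made to follow the action of the policy, and one extra pair,
whose baseline is flipped there, absorbs the reward terms. -/

theorem integral_le_neg_sum_integral {α ι : Type*} [MeasurableSpace α] [Fintype ι]
    {μ : Measure α} {g : α → ℝ} {G : ι → α → ℝ} (hg : Integrable g μ)
    (hG : ∀ i, Integrable (G i) μ) (hle : ∀ x, g x ≤ -∑ i, G i x) :
    ∫ x, g x ∂μ ≤ -∑ i, ∫ x, G i x ∂μ := by
  rw [← integral_finsetSum _ fun i _ => hG i, ← integral_neg]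
  exact integral_mono hg (integrable_finsetSum _ fun i _ => hG i).neg hle

theorem csInf_image_le_sub_sum_csInf {α ι : Type*} [Fintype ι] {S : Set α} {φ : α → ℝ}
    {Φ : ι → α → ℝ} {c : ℝ} (hS : S.Nonempty) (hφ : BddBelow (φ '' S))
    (hΦ : ∀ i, BddBelow (Φ i '' S)) (hle : ∀ p ∈ S, φ p ≤ c - ∑ i, Φ i p) :
    sInf (φ '' S) ≤ c - ∑ i, sInf (Φ i '' S) := by
  obtain ⟨p, hp⟩ := hS
  have hΦp : ∑ i, sInf (Φ i '' S) ≤ ∑ i, Φ i p :=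
    Finset.sum_le_sum fun i _ => csInf_le (hΦ i) ⟨p, hp, rfl⟩
  linarith [csInf_le hφ ⟨p, hp, rfl⟩, hle p hp]

theorem csInf_image_sub_csInf_image_le {α : Type*} {S : Set α} {φ ψ δ : α → ℝ}
    (hS : S.Nonempty) (hφ : BddBelow (φ '' S)) (hδ : BddAbove (δ '' S))
    (hle : ∀ p ∈ S, φ p ≤ ψ p + δ p) :
    sInf (φ '' S) - sInf (ψ '' S) ≤ sSup (δ '' S) := by
  rw [sub_le_iff_le_add, add_comm]
  refine le_of_forall_pos_le_add fun ε hε => ?_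
  obtain ⟨_, ⟨p, hp, rfl⟩, hlt⟩ :=
    exists_lt_of_csInf_lt (hS.image ψ) (lt_add_of_pos_right (sInf (ψ '' S)) hε)
  linarith [csInf_le hφ ⟨p, hp, rfl⟩, hle p hp, le_csSup hδ ⟨p, hp, rfl⟩]

theorem bddAbove_image_of_le_sub {α : Type*} {S : Set α} {φ ψ δ : α → ℝ}
    (hφ : BddAbove (φ '' S)) (hψ : BddBelow (ψ '' S))
    (hle : ∀ p ∈ S, δ p ≤ φ p - ψ p) : BddAbove (δ '' S) := by
  obtain ⟨M, hM⟩ := hφ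
  obtain ⟨m, hm⟩ := hψ
  refine ⟨M - m, ?_⟩
  rintro _ ⟨p, hp, rfl⟩
  linarith [hle p hp, hM ⟨p, hp, rfl⟩, hm ⟨p, hp, rfl⟩]

theorem eq_or_eq_neg_of_pm_one {a b : ℝ} (ha : a = 1 ∨ a = -1) (hb : b = 1 ∨ b = -1) :
    a = b ∨ a = -b := by
  rcases ha with rfl | rfl <;> rcases hb with rfl | rfl <;> norm_num

theorem neg_pm_one {b : ℝ} (hb : b = 1 ∨ b = -1) : -b = 1 ∨ -b = -1 := by
  rcases hb with rfl | rfl <;> norm_num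

theorem ne_zero_of_pm_one {b : ℝ} (hb : b = 1 ∨ b = -1) : b ≠ 0 := by
  rcases hb with rfl | rfl <;> norm_num

theorem mixAt_self {H : ℕ → Type} (π₁ π₂ : ∀ k, H k → ℝ) (k : ℕ) :
    mixAt H π₁ π₂ k k = π₁ k :=
  if_pos rfl

theorem mixAt_of_ne {H : ℕ → Type} (π₁ π₂ : ∀ k, H k → ℝ) {j k : ℕ} (hj : j ≠ k) :
    mixAt H π₁ π₂ k j = π₂ j :=
  if_neg hj

/-- Equals `π` wherever `π` and `πb` both take values in `{1, -1}`. -/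
def pmAction {H : ℕ → Type} (πb π : ∀ k, H k → ℝ) : ∀ k, H k → ℝ :=
  fun k h => if π k h = πb k h then πb k h else -πb k h

structure RegularAmbiguity (X : ℕ → Type) [∀ k, MeasurableSpace (X k)] (H : ℕ → Type)
    (concat : ∀ k, H k → ℝ → ℝ → X (k + 1) → H (k + 1))
    (P : ∀ k, H k → ℝ → Set (Measure (ℝ × X (k + 1)))) (K : ℕ) : Prop where
  nonempty : ∀ k (h : H k) (a : ℝ), a = 1 ∨ a = -1 → (P k h a).Nonempty
  integrable_fst : ∀ k (h : H k) (a : ℝ), ∀ p ∈ P k h a,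
    Integrable (fun q : ℝ × X (k + 1) => q.1) p
  integrable_rV : ∀ (πb π : ∀ k, H k → ℝ) k (h : H k) (a : ℝ), ∀ p ∈ P k h a,
    Integrable (fun q : ℝ × X (k + 1) =>
      rV X H concat P K πb π (k + 1) (concat k h a q.1 q.2)) p
  bddBelow_fst_add_rV : ∀ (πb π : ∀ k, H k → ℝ) k (h : H k) (a : ℝ),
    BddBelow ((fun p : Measure (ℝ × X (k + 1)) =>
      ∫ q, (q.1 + rV X H concat P K πb π (k + 1) (concat k h a q.1 q.2)) ∂p) '' P k h a)
  bddBelow_rV : ∀ (πb π : ∀ k, H k → ℝ) k (h : H k) (a : ℝ),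
    BddBelow ((fun p : Measure (ℝ × X (k + 1)) =>
      ∫ q, rV X H concat P K πb π (k + 1) (concat k h a q.1 q.2) ∂p) '' P k h a)
  bddAbove_fst : ∀ k (h : H k) (a : ℝ),
    BddAbove ((fun p : Measure (ℝ × X (k + 1)) => ∫ q, q.1 ∂p) '' P k h a)

section RelativeValue

variable {X : ℕ → Type} [∀ k, MeasurableSpace (X k)] {H : ℕ → Type}
  {concat : ∀ k, H k → ℝ → ℝ → X (k + 1) → H (k + 1)}
  {P : ∀ k, H k → ℝ → Set (Measure (ℝ × X (k + 1)))} {K : ℕ}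

local notation "𝓥" => rV X H concat P K
local notation "𝓠" => rQ X H concat P K

theorem rVal_congr {πb₁ π₁ πb₂ π₂ : ∀ k, H k → ℝ} :
    ∀ {f j : ℕ}, (∀ i ≥ j, πb₁ i = πb₂ i) → (∀ i ≥ j, π₁ i = π₂ i) →
      rVal X H concat P πb₁ π₁ f j = rVal X H concat P πb₂ π₂ f j
  | 0, _, _, _ => rfl
  | f + 1, j, hb, hπ => by
    have hnext : rVal X H concat P πb₁ π₁ f (j + 1) =
        rVal X H concat P πb₂ π₂ f (j + 1) :=
      rVal_congr (fun i hi => hb i (by omega)) (fun i hi => hπ i (by omega))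
    funext h
    simp only [rVal, hb j le_rfl, hπ j le_rfl, hnext]

theorem rV_congr {πb₁ π₁ πb₂ π₂ : ∀ k, H k → ℝ} {j : ℕ}
    (hb : ∀ i ≥ j, πb₁ i = πb₂ i) (hπ : ∀ i ≥ j, π₁ i = π₂ i) :
    𝓥 πb₁ π₁ j = 𝓥 πb₂ π₂ j :=
  funext fun h => congrFun (rVal_congr hb hπ) h

theorem rVal_self {πb : ∀ k, H k → ℝ} (hne : ∀ j (h : H j), (P j h (πb j h)).Nonempty) :
    ∀ f j, rVal X H concat P πb πb f j = 0
  | 0, _ => rfl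
  | f + 1, j => by
    funext h
    simp only [rVal, rVal_self hne f (j + 1), Pi.zero_apply, integral_zero]
    rw [(hne j h).image_const]
    exact csInf_singleton 0

theorem rV_self {πb : ∀ k, H k → ℝ} (hne : ∀ j (h : H j), (P j h (πb j h)).Nonempty)
    (j : ℕ) : 𝓥 πb πb j = 0 :=
  funext fun h => congrFun (rVal_self hne (K - j) j) h

theorem rV_eq_rQ {πb π : ∀ k, H k → ℝ} {j : ℕ} (hj : j < K) (h : H j) :
    𝓥 πb π j h = 𝓠 πb π j h (π j h) := by
  rw [rV, show K - j = K - (j + 1) + 1 by omega, rVal]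
  rfl

theorem rV_mixAt_eq_rQ {πb π ρ : ∀ k, H k → ℝ} {k : ℕ} (hk : k < K) (h : H k) :
    𝓥 πb (mixAt H π ρ k) k h = 𝓠 πb ρ k h (π k h) := by
  rw [rV_eq_rQ hk, mixAt_self, rQ, rQ,
    rV_congr (j := k + 1) (π₂ := ρ) (fun _ _ => rfl) fun i hi => mixAt_of_ne π ρ (by omega)]

theorem rV_mixAt_mixAt (s πb π : ∀ k, H k → ℝ) {j : ℕ} (hj : j < K) (h : H j) :
    𝓥 (mixAt H s πb j) (mixAt H s π j) j h =
      sInf ((fun p : Measure (ℝ × X (j + 1)) =>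
        ∫ q, 𝓥 πb π (j + 1) (concat j h (s j h) q.1 q.2) ∂p) '' P j h (s j h)) := by
  rw [rV_eq_rQ hj, rQ, mixAt_self, mixAt_self, if_pos rfl,
    rV_congr (j := j + 1) (fun i hi => mixAt_of_ne s πb (by omega))
      fun i hi => mixAt_of_ne s π (by omega)]

theorem rV_mixAt_baseline_succ (hP : RegularAmbiguity X H concat P K) {πb : ∀ k, H k → ℝ}
    (hπb : ∀ k (h : H k), πb k h = 1 ∨ πb k h = -1) (s : ∀ k, H k → ℝ) (j : ℕ) :
    𝓥 (mixAt H s πb j) πb (j + 1) = 0 :=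
  (rV_congr (fun i hi => mixAt_of_ne s πb (by omega)) fun _ _ => rfl).trans
    (rV_self (fun j h => hP.nonempty j h _ (hπb j h)) _)

theorem rV_mixAt_pmAction_of_eq (hP : RegularAmbiguity X H concat P K)
    {πb π : ∀ k, H k → ℝ} (hπb : ∀ k (h : H k), πb k h = 1 ∨ πb k h = -1) {j : ℕ}
    (hj : j < K) {h : H j} (hc : π j h = πb j h) :
    𝓥 (mixAt H (pmAction πb π) πb j) πb j h = 0 := by
  have hs : pmAction πb π j h = πb j h := if_pos hc
  rw [rV_eq_rQ hj, rQ, mixAt_self, hs, if_pos rfl, rV_mixAt_baseline_succ hP hπb]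
  simp only [Pi.zero_apply, integral_zero]
  rw [(hP.nonempty j h _ (hπb j h)).image_const]
  exact csInf_singleton 0

theorem rV_mixAt_pmAction_of_ne (hP : RegularAmbiguity X H concat P K)
    {πb π : ∀ k, H k → ℝ} (hπb : ∀ k (h : H k), πb k h = 1 ∨ πb k h = -1) {j : ℕ}
    (hj : j < K) {h : H j} (hc : π j h ≠ πb j h) :
    𝓥 (mixAt H (pmAction πb π) πb j) πb j h =
      sInf ((fun p : Measure (ℝ × X (j + 1)) => ∫ q, q.1 ∂p) '' P j h (πb j h))
        - sSup ((fun p : Measure (ℝ × X (j + 1)) => ∫ q, q.1 ∂p) '' P j h (-πb j h)) := by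
  have hs : pmAction πb π j h = -πb j h := if_neg hc
  rw [rV_eq_rQ hj, rQ, mixAt_self, hs, if_neg (self_ne_neg.mpr (ne_zero_of_pm_one (hπb j h))),
    neg_neg, rV_mixAt_baseline_succ hP hπb]
  simp only [Pi.zero_apply, add_zero]

theorem csInf_image_integral_fst_le_csSup (hP : RegularAmbiguity X H concat P K)
    {πb : ∀ k, H k → ℝ} (hπb : ∀ k (h : H k), πb k h = 1 ∨ πb k h = -1) {j : ℕ} (h : H j) :
    sInf ((fun p : Measure (ℝ × X (j + 1)) => ∫ q, q.1 ∂p) '' P j h (πb j h))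
      ≤ sSup ((fun p : Measure (ℝ × X (j + 1)) => ∫ q, q.1 ∂p) '' P j h (πb j h)) := by
  have hne := hP.nonempty j h _ (hπb j h)
  have hbdd := hP.bddBelow_fst_add_rV πb πb j h (πb j h)
  simp only [rV_self (fun j h => hP.nonempty j h _ (hπb j h)), Pi.zero_apply, add_zero] at hbdd
  exact csInf_le_csSup (hne.image _) hbdd (hP.bddAbove_fst j h _)

theorem rV_le_neg_sum_of_eq (hP : RegularAmbiguity X H concat P K) {πb π : ∀ k, H k → ℝ}
    (hπb : ∀ k (h : H k), πb k h = 1 ∨ πb k h = -1) {j n : ℕ} (hj : j < K)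
    {B R : Fin n → ∀ k, H k → ℝ}
    (hle : ∀ h', 𝓥 πb π (j + 1) h' ≤ -∑ i, 𝓥 (B i) (R i) (j + 1) h') {h : H j}
    (hc : π j h = πb j h) :
    𝓥 πb π j h ≤
      -∑ i, 𝓥 (mixAt H (pmAction πb π) (B i) j) (mixAt H (pmAction πb π) (R i) j) j h := by
  have hs : pmAction πb π j h = πb j h := if_pos hc
  simp only [rV_mixAt_mixAt _ _ _ hj, hs]
  rw [rV_eq_rQ hj, rQ, if_pos hc, ← zero_sub]
  refine csInf_image_le_sub_sum_csInf (hP.nonempty j h _ (hπb j h))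
    (hP.bddBelow_rV _ _ _ _ _) (fun i => hP.bddBelow_rV _ _ _ _ _) fun p hp => ?_
  rw [zero_sub]
  exact integral_le_neg_sum_integral (hP.integrable_rV _ _ _ _ _ p hp)
    (fun i => hP.integrable_rV _ _ _ _ _ p hp) fun q => hle _

theorem rV_add_rV_le_neg_sum_of_ne (hP : RegularAmbiguity X H concat P K)
    {πb π : ∀ k, H k → ℝ} (hπb : ∀ k (h : H k), πb k h = 1 ∨ πb k h = -1) {j n : ℕ}
    (hj : j < K) {B R : Fin n → ∀ k, H k → ℝ}
    (hle : ∀ h', 𝓥 πb π (j + 1) h' ≤ -∑ i, 𝓥 (B i) (R i) (j + 1) h') {h : H j}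
    (hc : π j h ≠ πb j h) :
    𝓥 πb π j h + 𝓥 (mixAt H (pmAction πb π) πb j) πb j h ≤
      -∑ i, 𝓥 (mixAt H (pmAction πb π) (B i) j) (mixAt H (pmAction πb π) (R i) j) j h := by
  have hs : pmAction πb π j h = -πb j h := if_neg hc
  have hcont : sInf ((fun p : Measure (ℝ × X (j + 1)) =>
        ∫ q, (q.1 + 𝓥 πb π (j + 1) (concat j h (-πb j h) q.1 q.2)) ∂p) '' P j h (-πb j h))
      ≤ sSup ((fun p : Measure (ℝ × X (j + 1)) => ∫ q, q.1 ∂p) '' P j h (-πb j h))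
        - ∑ i, sInf ((fun p : Measure (ℝ × X (j + 1)) =>
          ∫ q, 𝓥 (B i) (R i) (j + 1) (concat j h (-πb j h) q.1 q.2) ∂p)
          '' P j h (-πb j h)) := by
    refine csInf_image_le_sub_sum_csInf (hP.nonempty j h _ (neg_pm_one (hπb j h)))
      (hP.bddBelow_fst_add_rV _ _ _ _ _) (fun i => hP.bddBelow_rV _ _ _ _ _) fun p hp => ?_
    rw [integral_add (hP.integrable_fst _ _ _ p hp) (hP.integrable_rV _ _ _ _ _ p hp)]
    have := integral_le_neg_sum_integral (hP.integrable_rV _ _ _ _ _ p hp)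
      (fun i => hP.integrable_rV _ _ _ _ _ p hp) fun q => hle (concat j h (-πb j h) q.1 q.2)
    linarith [le_csSup (hP.bddAbove_fst j h _) ⟨p, hp, rfl⟩]
  rw [rV_mixAt_pmAction_of_ne hP hπb hj hc, rV_eq_rQ hj, rQ, if_neg hc]
  simp only [rV_mixAt_mixAt _ _ _ hj, hs]
  linarith [csInf_image_integral_fst_le_csSup hP hπb h]

theorem exists_rV_le_neg_sum (hP : RegularAmbiguity X H concat P K) {πb : ∀ k, H k → ℝ}
    (hπb : ∀ k (h : H k), πb k h = 1 ∨ πb k h = -1) (π : ∀ k, H k → ℝ) {j : ℕ}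
    (hj : j ≤ K) :
    ∃ (n : ℕ) (B R : Fin n → ∀ k, H k → ℝ),
      ∀ h : H j, 𝓥 πb π j h ≤ -∑ i, 𝓥 (B i) (R i) j h := by
  induction hj using Nat.decreasingInduction with
  | self => exact ⟨0, Fin.elim0, Fin.elim0, fun h => by simp [rV, rVal]⟩
  | of_succ j hj ih =>
    obtain ⟨n, B, R, hle⟩ := ih
    refine ⟨n + 1,
      Fin.cons (mixAt H (pmAction πb π) πb j) fun i => mixAt H (pmAction πb π) (B i) j,
      Fin.cons πb fun i => mixAt H (pmAction πb π) (R i) j, fun h => ?_⟩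
    rw [Fin.sum_univ_succ]
    simp only [Fin.cons_zero, Fin.cons_succ]
    by_cases hc : π j h = πb j h
    · rw [rV_mixAt_pmAction_of_eq hP hπb hj hc, zero_add]
      exact rV_le_neg_sum_of_eq hP hπb hj hle hc
    · linarith [rV_add_rV_le_neg_sum_of_ne hP hπb hj hle hc]

theorem bddAbove_image_integral_rV (hP : RegularAmbiguity X H concat P K)
    {πb : ∀ k, H k → ℝ} (hπb : ∀ k (h : H k), πb k h = 1 ∨ πb k h = -1)
    (π : ∀ k, H k → ℝ) {k : ℕ} (hk : k + 1 ≤ K) (h : H k) (a : ℝ) :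
    BddAbove ((fun p : Measure (ℝ × X (k + 1)) =>
      ∫ q, 𝓥 πb π (k + 1) (concat k h a q.1 q.2) ∂p) '' P k h a) := by
  obtain ⟨n, B, R, hle⟩ := exists_rV_le_neg_sum hP hπb π hk
  choose m hm using fun i => hP.bddBelow_rV (B i) (R i) k h a
  refine ⟨-∑ i, m i, ?_⟩
  rintro _ ⟨p, hp, rfl⟩
  have := integral_le_neg_sum_integral (hP.integrable_rV πb π k h a p hp)
    (fun i => hP.integrable_rV (B i) (R i) k h a p hp) fun q => hle _
  linarith [Finset.sum_le_sum fun i (_ : i ∈ Finset.univ) => hm i ⟨p, hp, rfl⟩]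

theorem rQ_sub_rQ_le (hP : RegularAmbiguity X H concat P K) {πb : ∀ k, H k → ℝ}
    (hπb : ∀ k (h : H k), πb k h = 1 ∨ πb k h = -1) (π' π'' : ∀ k, H k → ℝ) {k : ℕ}
    (hk : k + 1 ≤ K) (h : H k) {a : ℝ} (ha : a = 1 ∨ a = -1) :
    𝓠 πb π' k h a - 𝓠 πb π'' k h a ≤
      sSup ((fun p : Measure (ℝ × X (k + 1)) =>
        ∫ q, (𝓥 πb π' (k + 1) (concat k h a q.1 q.2)
          - 𝓥 πb π'' (k + 1) (concat k h a q.1 q.2)) ∂p) '' P k h a) := by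
  have hδ := bddAbove_image_of_le_sub (bddAbove_image_integral_rV hP hπb π' hk h a)
    (hP.bddBelow_rV πb π'' k h a) fun p hp =>
      (integral_sub (hP.integrable_rV _ _ _ _ _ p hp) (hP.integrable_rV _ _ _ _ _ p hp)).le
  rcases eq_or_eq_neg_of_pm_one ha (hπb k h) with rfl | rfl
  · rw [rQ, rQ, if_pos rfl, if_pos rfl]
    refine csInf_image_sub_csInf_image_le (hP.nonempty k h _ ha) (hP.bddBelow_rV _ _ _ _ _) hδ
      fun p hp => ?_
    rw [integral_sub (hP.integrable_rV _ _ _ _ _ p hp) (hP.integrable_rV _ _ _ _ _ p hp)]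
    linarith
  · have hflip : -πb k h ≠ πb k h := neg_ne_self.mpr (ne_zero_of_pm_one (hπb k h))
    rw [rQ, rQ, if_neg hflip, if_neg hflip, sub_sub_sub_cancel_right]
    refine csInf_image_sub_csInf_image_le (hP.nonempty k h _ ha)
      (hP.bddBelow_fst_add_rV _ _ _ _ _) hδ fun p hp => ?_
    rw [integral_add (hP.integrable_fst _ _ _ p hp) (hP.integrable_rV _ _ _ _ _ p hp),
      integral_add (hP.integrable_fst _ _ _ p hp) (hP.integrable_rV _ _ _ _ _ p hp),
      integral_sub (hP.integrable_rV _ _ _ _ _ p hp) (hP.integrable_rV _ _ _ _ _ p hp)]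
    linarith

end RelativeValue

theorem peeling_policy_improvement_general
    (X : ℕ → Type) [∀ k, MeasurableSpace (X k)] (H : ℕ → Type)
    (concat : ∀ k, H k → ℝ → ℝ → X (k + 1) → H (k + 1))
    (P : ∀ k, H k → ℝ → Set (Measure (ℝ × X (k + 1))))
    (K : ℕ)
    (hPne : ∀ k (h : H k) (a : ℝ), a = 1 ∨ a = -1 → (P k h a).Nonempty)
    (hIntR : ∀ k (h : H k) (a : ℝ), ∀ p ∈ P k h a,
      Integrable (fun q : ℝ × X (k + 1) => q.1) p)
    (hIntV : ∀ (πb π : ∀ k, H k → ℝ) k (h : H k) (a : ℝ), ∀ p ∈ P k h a,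
      Integrable (fun q : ℝ × X (k + 1) =>
        rV X H concat P K πb π (k + 1) (concat k h a q.1 q.2)) p)
    (hBddB : ∀ (πb π : ∀ k, H k → ℝ) k (h : H k) (a : ℝ),
      BddBelow ((fun p : Measure (ℝ × X (k + 1)) =>
          ∫ q, (q.1 + rV X H concat P K πb π (k + 1) (concat k h a q.1 q.2)) ∂p) '' P k h a)
      ∧ BddBelow ((fun p : Measure (ℝ × X (k + 1)) =>
          ∫ q, rV X H concat P K πb π (k + 1) (concat k h a q.1 q.2) ∂p) '' P k h a))
    (hBddA : ∀ k (h : H k) (a : ℝ),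
      BddAbove ((fun p : Measure (ℝ × X (k + 1)) => ∫ q, q.1 ∂p) '' P k h a))
    (πb : ∀ k, H k → ℝ) (hπb : ∀ k (h : H k), πb k h = 1 ∨ πb k h = -1)
    (π π' π'' : ∀ k, H k → ℝ)
    (hπ : ∀ k (h : H k), π k h = 1 ∨ π k h = -1)
    (k : ℕ) (hk : k + 1 < K) (h : H k) :
    rV X H concat P K πb (mixAt H π π' k) k h
        - rV X H concat P K πb (mixAt H π π'' k) k h
      ≤ sSup ((fun p : Measure (ℝ × X (k + 1)) =>
          ∫ q, (rV X H concat P K πb π' (k + 1) (concat k h (π k h) q.1 q.2)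
            - rV X H concat P K πb π'' (k + 1) (concat k h (π k h) q.1 q.2)) ∂p)
          '' P k h (π k h)) := by
  have hP : RegularAmbiguity X H concat P K :=
    ⟨hPne, hIntR, hIntV, fun πb π k h a => (hBddB πb π k h a).1,
      fun πb π k h a => (hBddB πb π k h a).2, hBddA⟩
  rw [rV_mixAt_eq_rQ (by omega) h, rV_mixAt_eq_rQ (by omega) h]
  exact rQ_sub_rQ_le hP hπb π' π'' hk.le h (hπ k h)

/-- Supplementary peeling lemma for policy improvement: for DTRs `π, π', π'', π^b` and any
stage `k ∈ {1,…,K−1}`, writing `a_k = π_k(h⃗_k)`,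
`V^{π_k π'_{(k+1):K}/π^b}_k(h⃗_k) − V^{π_k π''_{(k+1):K}/π^b}_k(h⃗_k)
  ≤ sup_{p ∈ 𝒫_{h⃗_k,a_k}} ∫ [V^{π'/π^b}_{k+1}(h⃗_k,a_k,r,x) − V^{π''/π^b}_{k+1}(h⃗_k,a_k,r,x)] dp`. -/
theorem peeling_policy_improvement
    (X : ℕ → Type) [∀ k, MeasurableSpace (X k)] (H : ℕ → Type)
    (concat : ∀ k, H k → ℝ → ℝ → X (k + 1) → H (k + 1))
    (P : ∀ k, H k → ℝ → Set (Measure (ℝ × X (k + 1))))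
    (K : ℕ)
    (hPne : ∀ k (h : H k) (a : ℝ), a = 1 ∨ a = -1 → (P k h a).Nonempty)
    (hPprob : ∀ k (h : H k) (a : ℝ), ∀ p ∈ P k h a, IsProbabilityMeasure p)
    (hIntR : ∀ k (h : H k) (a : ℝ), ∀ p ∈ P k h a,
      Integrable (fun q : ℝ × X (k + 1) => q.1) p)
    (hIntV : ∀ (πb π : ∀ k, H k → ℝ) k (h : H k) (a : ℝ), ∀ p ∈ P k h a,
      Integrable (fun q : ℝ × X (k + 1) =>
        rV X H concat P K πb π (k + 1) (concat k h a q.1 q.2)) p)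
    (hBddB : ∀ (πb π : ∀ k, H k → ℝ) k (h : H k) (a : ℝ),
      BddBelow ((fun p : Measure (ℝ × X (k + 1)) =>
          ∫ q, (q.1 + rV X H concat P K πb π (k + 1) (concat k h a q.1 q.2)) ∂p) '' P k h a)
      ∧ BddBelow ((fun p : Measure (ℝ × X (k + 1)) =>
          ∫ q, rV X H concat P K πb π (k + 1) (concat k h a q.1 q.2) ∂p) '' P k h a))
    (hBddA : ∀ k (h : H k) (a : ℝ),
      BddAbove ((fun p : Measure (ℝ × X (k + 1)) => ∫ q, q.1 ∂p) '' P k h a))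
    (πb : ∀ k, H k → ℝ) (hπb : ∀ k (h : H k), πb k h = 1 ∨ πb k h = -1)
    (π π' π'' : ∀ k, H k → ℝ)
    (hπ : ∀ k (h : H k), π k h = 1 ∨ π k h = -1)
    (hπ' : ∀ k (h : H k), π' k h = 1 ∨ π' k h = -1)
    (hπ'' : ∀ k (h : H k), π'' k h = 1 ∨ π'' k h = -1)
    (k : ℕ) (hk : k + 1 < K) (h : H k) :
    rV X H concat P K πb (mixAt H π π' k) k h
        - rV X H concat P K πb (mixAt H π π'' k) k h
      ≤ sSup ((fun p : Measure (ℝ × X (k + 1)) =>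
          ∫ q, (rV X H concat P K πb π' (k + 1) (concat k h (π k h) q.1 q.2)
            - rV X H concat P K πb π'' (k + 1) (concat k h (π k h) q.1 q.2)) ∂p)
          '' P k h (π k h)) :=
  peeling_policy_improvement_general X H concat P K hPne hIntR hIntV hBddB hBddA πb hπb π π' π'' hπ
    k hk h

end
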